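/- arXiv:2503.14164 — 3 statements merged into one kernel-verified Lean document; each statement's English description precedes it below -/
import Mathlib

section
/- Define I : [0,1] → ℝ by I(t) = t log t + (1−t) log(1−t) + log(M+1) − (1−t) log M for t ∈ [0,1/2] and I(t) = t log t + (1−t) log(1−t) + log(M+1) − t log M for t ∈ (1/2,1] (with the convention 0 log 0 = 0). Then I is continuous on [0,1], I(t) ≥ 0 for all t, I(t) = 0 if and only if t = 1/(M+1) or t = M/(M+1), and I is not differentiable at t = 1/2. -/
/-!
On each half of `[0, 1]` the rate function is a Bernoulli relative entropy: for `t ≤ 1/2` with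
respect to the parameter `p = 1/(M+1)`, for `t > 1/2` with respect to `q = M/(M+1)`. Writing it as
`p φ(t/p) + (1-p) φ((1-t)/(1-p))` with `φ x = x log x + 1 - x ≥ 0`, vanishing only at `x = 1`,
gives nonnegativity and the zero set, since `p < 1/2 < q` when `M ≥ 2`. Globally
`I t = t log t + (1-t) log (1-t) + log (M+1) - max t (1-t) · log M`, which is continuous and,
as `log M ≠ 0`, inherits the corner of `max t (1-t)` at `1/2`.
-/

open Real

/-- The level-1 rate function `I` for the right-bracket frequency observable on the
Dyck shift over `2M` symbols (using Lean's convention `Real.log 0 = 0`, which gives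
`0 log 0 = 0`). -/
noncomputable def dyckLevel1Rate (M : ℕ) (t : ℝ) : ℝ :=
  t * Real.log t + (1 - t) * Real.log (1 - t) + Real.log (M + 1) -
    (if t ≤ 1 / 2 then (1 - t) * Real.log M else t * Real.log M)

open InformationTheory

noncomputable def bernoulliRelEntropy (p t : ℝ) : ℝ :=
  t * log t + (1 - t) * log (1 - t) - (t * log p + (1 - t) * log (1 - p))

lemma mul_log_sub_mul_log_eq_mul_klFun {p : ℝ} (hp : 0 < p) (t : ℝ) :
    t * log t - t * log p = p * klFun (t / p) + t - p := by
  rcases eq_or_ne t 0 with rfl | ht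
  · simp [klFun_zero]
  · rw [klFun_apply, log_div ht hp.ne']
    field_simp
    ring

lemma bernoulliRelEntropy_eq_klFun {p : ℝ} (hp0 : 0 < p) (hp1 : p < 1) (t : ℝ) :
    bernoulliRelEntropy p t = p * klFun (t / p) + (1 - p) * klFun ((1 - t) / (1 - p)) := by
  have h := mul_log_sub_mul_log_eq_mul_klFun hp0 t
  have h' := mul_log_sub_mul_log_eq_mul_klFun (sub_pos.2 hp1) (1 - t)
  unfold bernoulliRelEntropy
  linarith

lemma bernoulliRelEntropy_nonneg {p t : ℝ} (hp0 : 0 < p) (hp1 : p < 1) (ht0 : 0 ≤ t)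
    (ht1 : t ≤ 1) : 0 ≤ bernoulliRelEntropy p t := by
  rw [bernoulliRelEntropy_eq_klFun hp0 hp1]
  have := klFun_nonneg (div_nonneg ht0 hp0.le)
  have := klFun_nonneg (div_nonneg (sub_nonneg.2 ht1) (sub_pos.2 hp1).le)
  have := sub_pos.2 hp1
  positivity

lemma bernoulliRelEntropy_eq_zero_iff {p t : ℝ} (hp0 : 0 < p) (hp1 : p < 1) (ht0 : 0 ≤ t)
    (ht1 : t ≤ 1) : bernoulliRelEntropy p t = 0 ↔ t = p := by
  have hq := sub_pos.2 hp1
  have hx := div_nonneg ht0 hp0.le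
  have hy := div_nonneg (sub_nonneg.2 ht1) hq.le
  rw [bernoulliRelEntropy_eq_klFun hp0 hp1,
    add_eq_zero_iff_of_nonneg (by have := klFun_nonneg hx; positivity)
      (by have := klFun_nonneg hy; positivity),
    mul_eq_zero, mul_eq_zero, klFun_eq_zero_iff hx, klFun_eq_zero_iff hy,
    div_eq_one_iff_eq hp0.ne', div_eq_one_iff_eq hq.ne']
  constructor
  · rintro ⟨h | h, -⟩ <;> linarith
  · rintro rfl
    exact ⟨Or.inr rfl, Or.inr rfl⟩

lemma log_natCast_div_succ (M : ℕ) :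
    log ((M : ℝ) / (M + 1)) = log M - log (M + 1) := by
  rcases M.eq_zero_or_pos with rfl | hM
  · simp
  · exact log_div (by positivity) (by positivity)

lemma one_div_natCast_succ_lt_one {M : ℕ} (hM : 0 < M) : 1 / ((M : ℝ) + 1) < 1 := by
  rw [div_lt_one (by positivity)]
  exact_mod_cast Nat.succ_lt_succ hM

lemma natCast_div_succ_lt_one (M : ℕ) : (M : ℝ) / (M + 1) < 1 := by
  rw [div_lt_one (by positivity)]
  linarith

lemma one_div_natCast_succ_lt_half {M : ℕ} (hM : 1 < M) : 1 / ((M : ℝ) + 1) < 1 / 2 := by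
  have : (1 : ℝ) < M := by exact_mod_cast hM
  rw [div_lt_div_iff₀ (by positivity) two_pos]
  linarith

lemma half_lt_natCast_div_succ {M : ℕ} (hM : 1 < M) : 1 / 2 < (M : ℝ) / (M + 1) := by
  have : (1 : ℝ) < M := by exact_mod_cast hM
  rw [div_lt_div_iff₀ two_pos (by positivity)]
  linarith

section dyckLevel1Rate

variable {M : ℕ} {t : ℝ}

lemma dyckLevel1Rate_of_le (ht : t ≤ 1 / 2) :
    dyckLevel1Rate M t = bernoulliRelEntropy (1 / (M + 1)) t := by
  have hq : 1 - 1 / ((M : ℝ) + 1) = M / (M + 1) := by field_simp; ring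
  rw [dyckLevel1Rate, if_pos ht, bernoulliRelEntropy, hq, log_natCast_div_succ, one_div,
    log_inv]
  ring

lemma dyckLevel1Rate_of_gt (ht : 1 / 2 < t) :
    dyckLevel1Rate M t = bernoulliRelEntropy (M / (M + 1)) t := by
  have hp : 1 - (M : ℝ) / (M + 1) = ((M : ℝ) + 1)⁻¹ := by field_simp; ring
  rw [dyckLevel1Rate, if_neg ht.not_ge, bernoulliRelEntropy, hp, log_natCast_div_succ, log_inv]
  ring

lemma dyckLevel1Rate_eq_max (M : ℕ) : dyckLevel1Rate M = fun t ↦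
    t * log t + (1 - t) * log (1 - t) + log (M + 1) - max t (1 - t) * log M := by
  ext t
  rcases le_or_gt t (1 / 2) with ht | ht
  · rw [dyckLevel1Rate, if_pos ht, max_eq_right (by linarith)]
  · rw [dyckLevel1Rate, if_neg ht.not_ge, max_eq_left (by linarith)]

lemma continuous_dyckLevel1Rate (M : ℕ) : Continuous (dyckLevel1Rate M) := by
  rw [dyckLevel1Rate_eq_max]
  have h1 : Continuous fun t : ℝ ↦ (1 - t) * log (1 - t) :=
    continuous_mul_log.comp (continuous_const.sub continuous_id)
  exact ((continuous_mul_log.add h1).add continuous_const).sub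
    ((continuous_id.max (continuous_const.sub continuous_id)).mul continuous_const)

lemma dyckLevel1Rate_nonneg (hM : 0 < M) (ht0 : 0 ≤ t) (ht1 : t ≤ 1) :
    0 ≤ dyckLevel1Rate M t := by
  rcases le_or_gt t (1 / 2) with ht | ht
  · rw [dyckLevel1Rate_of_le ht]
    exact bernoulliRelEntropy_nonneg (by positivity) (one_div_natCast_succ_lt_one hM) ht0 ht1
  · rw [dyckLevel1Rate_of_gt ht]
    exact bernoulliRelEntropy_nonneg (by positivity) (natCast_div_succ_lt_one M) ht0 ht1

lemma dyckLevel1Rate_eq_zero_iff (hM : 1 < M) (ht0 : 0 ≤ t) (ht1 : t ≤ 1) :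
    dyckLevel1Rate M t = 0 ↔ t = 1 / (M + 1) ∨ t = M / (M + 1) := by
  have hM0 : 0 < M := by omega
  have hp := one_div_natCast_succ_lt_half hM
  have hq := half_lt_natCast_div_succ hM
  rcases le_or_gt t (1 / 2) with ht | ht
  · rw [dyckLevel1Rate_of_le ht, bernoulliRelEntropy_eq_zero_iff (by positivity)
      (one_div_natCast_succ_lt_one hM0) ht0 ht1]
    constructor
    · exact Or.inl
    · rintro (h | h) <;> linarith
  · rw [dyckLevel1Rate_of_gt ht, bernoulliRelEntropy_eq_zero_iff (by positivity)
      (natCast_div_succ_lt_one M) ht0 ht1]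
    constructor
    · exact Or.inr
    · rintro (h | h) <;> linarith

end dyckLevel1Rate

lemma not_differentiableAt_max_self_one_sub :
    ¬ DifferentiableAt ℝ (fun t : ℝ ↦ max t (1 - t)) (1 / 2) := by
  have h : (fun t : ℝ ↦ max t (1 - t)) = fun t ↦ |t - 1 / 2| + 1 / 2 := by
    ext t
    rcases le_total t (1 / 2) with ht | ht
    · rw [max_eq_right (by linarith), abs_of_nonpos (by linarith)]; ring
    · rw [max_eq_left (by linarith), abs_of_nonneg (by linarith)]; ring
  rw [h, differentiableAt_add_const_iff, differentiableAt_comp_sub_const, sub_self]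
  exact not_differentiableAt_abs_zero

lemma not_differentiableAt_dyckLevel1Rate_half {M : ℕ} (hM : 1 < M) :
    ¬ DifferentiableAt ℝ (dyckLevel1Rate M) (1 / 2) := by
  have hlog : log M ≠ 0 := (log_pos (by exact_mod_cast hM)).ne'
  have hsmooth : DifferentiableAt ℝ
      (fun t : ℝ ↦ t * log t + (1 - t) * log (1 - t) + log (M + 1)) (1 / 2) := by
    fun_prop (disch := norm_num)
  rw [dyckLevel1Rate_eq_max, hsmooth.fun_sub_iff_right]
  intro h
  exact not_differentiableAt_max_self_one_sub (by simpa [hlog] using h.mul_const (log M)⁻¹)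

/-- `I` is continuous on `[0,1]`, nonnegative there, vanishes exactly at
`t = 1/(M+1)` and `t = M/(M+1)`, and is not differentiable at `t = 1/2`. -/
theorem stmt5 (M : ℕ) (hM : 2 ≤ M) :
    ContinuousOn (dyckLevel1Rate M) (Set.Icc 0 1) ∧
    (∀ t ∈ Set.Icc (0 : ℝ) 1, 0 ≤ dyckLevel1Rate M t) ∧
    (∀ t ∈ Set.Icc (0 : ℝ) 1,
      (dyckLevel1Rate M t = 0 ↔ t = 1 / (M + 1) ∨ t = M / (M + 1))) ∧
    ¬ DifferentiableAt ℝ (dyckLevel1Rate M) (1 / 2) :=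
  ⟨(continuous_dyckLevel1Rate M).continuousOn,
    fun _ ht ↦ dyckLevel1Rate_nonneg (by omega) ht.1 ht.2,
    fun _ ht ↦ dyckLevel1Rate_eq_zero_iff hM ht.1 ht.2,
    not_differentiableAt_dyckLevel1Rate_half hM⟩
end

section
/- Let x ∈ Σ_α = (D_α ∪ {β})^ℤ and suppose there exists i ∈ ℤ such that x_i = β and H_{α,i−j+1}(x) ≠ H_{α,i+1}(x) for every j ≥ 1. Then for every j ≥ 1, the number of indices k with i−j+1 ≤ k ≤ i and x_k = β is strictly greater than the number of such k with x_k ≠ β. -/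
/-- The symbol weight on the alphabet `D_α ∪ {β}` (encoded as `Option (Fin M)`, with
`none = β` and `some k = α_k`): `+1` on `D_α` and `−1` on `β`. -/
def epsα {M : ℕ} (a : Option (Fin M)) : ℤ := if a = none then -1 else 1

/-- The height function `H_{α,i}` on `Σ_α = (D_α ∪ {β})^ℤ`:
`H_{α,i}(y) = Σ_{j=0}^{i−1}(𝟙[y_j ∈ D_α] − 𝟙[y_j = β])` for `i ≥ 0`, and
`H_{α,i}(y) = Σ_{j=i}^{−1}(𝟙[y_j = β] − 𝟙[y_j ∈ D_α])` for `i ≤ −1`. -/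
def Hα {M : ℕ} (x : ℤ → Option (Fin M)) (i : ℤ) : ℤ :=
  if 0 ≤ i then ∑ j ∈ Finset.range i.toNat, epsα (x j)
  else - ∑ j ∈ Finset.range (-i).toNat, epsα (x (-(j : ℤ) - 1))

lemma Hstep {M : ℕ} (x : ℤ → Option (Fin M)) (i : ℤ) :
    Hα x (i + 1) = Hα x i + epsα (x i) := by
  unfold Hα
  rcases le_or_gt 0 i with h | h
  · rw [if_pos (by omega : (0:ℤ) ≤ i + 1), if_pos h]
    have h1 : (i + 1).toNat = i.toNat + 1 := by omega
    rw [h1, Finset.sum_range_succ]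
    rw [Int.toNat_of_nonneg h]
  · rcases eq_or_lt_of_le (by omega : i + 1 ≤ 0) with h0 | h0
    · have hi : i = -1 := by omega
      subst hi
      norm_num [Finset.sum_range_one]
    · rw [if_neg (by omega), if_neg (by omega)]
      have h1 : (-i).toNat = (-(i+1)).toNat + 1 := by omega
      rw [h1, Finset.sum_range_succ]
      have h2 : (-(((-(i+1)).toNat : ℤ)) - 1) = i := by omega
      rw [h2]
      ring

/-- If `x ∈ Σ_α` has `x_i = β` and `H_{α,i−j+1}(x) ≠ H_{α,i+1}(x)` for
every `j ≥ 1`, then for every `j ≥ 1` the number of indices `k ∈ [i−j+1, i]` with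
`x_k = β` strictly exceeds the number of such `k` with `x_k ≠ β`. -/
theorem stmt8 {M : ℕ} (x : ℤ → Option (Fin M)) (i : ℤ)
    (hxi : x i = none)
    (hH : ∀ j : ℕ, 1 ≤ j → Hα x (i - j + 1) ≠ Hα x (i + 1)) :
    ∀ j : ℕ, 1 ≤ j →
      ((Finset.range j).filter (fun m : ℕ => x (i - (m : ℤ)) = none)).card >
        ((Finset.range j).filter (fun m : ℕ => x (i - (m : ℤ)) ≠ none)).card := by
  set S : ℕ → ℤ := fun j => ∑ m ∈ Finset.range j, epsα (x (i - m)) with hSdef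
  have hHS : ∀ j : ℕ, Hα x (i - j + 1) = Hα x (i + 1) - S j := by
    intro j
    induction j with
    | zero => simp [hSdef]
    | succ n ih =>
      have hstep := Hstep x (i - n)
      have he : i - (n : ℤ) + 1 - 1 = i - ((n : ℕ) + 1 : ℕ) + 1 := by push_cast; ring
      have : Hα x (i - ((n : ℕ) + 1 : ℕ) + 1) = Hα x (i - n + 1) - epsα (x (i - n)) := by
        rw [← he]
        have h3 : i - (n:ℤ) + 1 - 1 = i - n := by ring
        rw [h3]; omega
      rw [this, ih, hSdef]
      simp [Finset.sum_range_succ]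
      ring
  have hSne : ∀ j : ℕ, 1 ≤ j → S j ≠ 0 := by
    intro j hj h0
    exact hH j hj (by rw [hHS j, h0, sub_zero])
  have hSneg : ∀ j : ℕ, 1 ≤ j → S j < 0 := by
    intro j hj
    induction j with
    | zero => omega
    | succ n ih =>
      rcases Nat.eq_or_lt_of_le hj with h1 | h1
      · have : S 1 = epsα (x i) := by simp [hSdef]
        rw [← h1, this, epsα, if_pos hxi]; norm_num
      · have hn : 1 ≤ n := by omega
        have hsn := ih hn
        have heps : epsα (x (i - n)) ≤ 1 := by
          unfold epsα; split <;> omega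
        have hSs : S (n + 1) = S n + epsα (x (i - n)) := by
          simp [hSdef, Finset.sum_range_succ]
        have := hSne (n + 1) (by omega)
        omega
  intro j hj
  have hsplit := Finset.sum_filter_add_sum_filter_not (Finset.range j)
    (fun m : ℕ => x (i - (m : ℤ)) = none) (fun m => epsα (x (i - m)))
  have h1 : ∑ m ∈ (Finset.range j).filter (fun m : ℕ => x (i - (m : ℤ)) = none),
      epsα (x (i - m)) = -(((Finset.range j).filter (fun m : ℕ => x (i - (m : ℤ)) = none)).card : ℤ) := by
    rw [Finset.sum_congr rfl (fun m hm => by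
      simp only [Finset.mem_filter] at hm
      rw [epsα, if_pos hm.2])]
    simp
  have h2 : ∑ m ∈ (Finset.range j).filter (fun m : ℕ => ¬ x (i - (m : ℤ)) = none),
      epsα (x (i - m)) = (((Finset.range j).filter (fun m : ℕ => ¬ x (i - (m : ℤ)) = none)).card : ℤ) := by
    rw [Finset.sum_congr rfl (fun m hm => by
      simp only [Finset.mem_filter] at hm
      rw [epsα, if_neg hm.2])]
    simp
  have hS := hSneg j hj
  rw [hSdef] at hS
  simp only at hS
  rw [← hsplit, h1, h2] at hS
  have : ((Finset.range j).filter (fun m : ℕ => x (i - (m : ℤ)) ≠ none)) =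
      ((Finset.range j).filter (fun m : ℕ => ¬ x (i - (m : ℤ)) = none)) := rfl
  rw [this]
  omega
end

section
/- Let ν be an ergodic shift-invariant Borel probability measure on the full shift Σ_α = (D_α ∪ {β})^ℤ with ν([β]) < 1/2, where [β] = {x : x₀ = β}. Then ν gives measure 1 to the set K_α of points x such that every occurrence of the symbol β is matched: for every i with x_i = β there exists j ≥ 1 with H_{α,i−j+1}(x) = H_{α,i+1}(x). -/
open MeasureTheory
open scoped ENNReal

instance (M : ℕ) : MeasurableSpace (Option (Fin M)) := ⊤

instance (M : ℕ) : MeasurableSingletonClass (Option (Fin M)) :=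
  ⟨fun _ => MeasurableSpace.measurableSet_top⟩

/-- The left shift on a two-sided full shift. -/
def leftShift {S : Type*} (x : ℤ → S) : ℤ → S := fun i => x (i + 1)

/-- `K_α`: the set of points of `Σ_α` in which every occurrence of `β` is matched. -/
def Kα (M : ℕ) : Set (ℤ → Option (Fin M)) :=
  {x | ∀ i : ℤ, x i = none → ∃ j : ℕ, 1 ≤ j ∧ Hα x (i - j + 1) = Hα x (i + 1)}

/-!
A `β` at position `i` is unmatched exactly when the height stays strictly above `H_{α,i+1}` at
every position `≤ i`, i.e. when all Birkhoff sums of the weight `+1` on `β`, `-1` on `D_α`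
under the right shift, started at the `i`-th translate of `x`, are `≥ 1`. If such points had
positive measure, Poincaré recurrence and ergodicity would make almost every orbit visit them
infinitely often; each visit raises the running Birkhoff sum by at least `1`, so almost every
point has a positive Birkhoff sum. The maximal ergodic inequality then gives the weight a
nonnegative integral, i.e. `ν([β]) ≥ 1/2`.
-/

open Filter Finset

section BirkhoffSums

variable {X : Type*} {T : X → X} {g : X → ℝ}

def maxBirkhoffSum (T : X → X) (g : X → ℝ) (N : ℕ) : X → ℝ :=
  (range (N + 1)).sup' nonempty_range_add_one fun n => birkhoffSum T g n

lemma birkhoffSum_le_maxBirkhoffSum {n N : ℕ} (hn : n ≤ N) (x : X) :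
    birkhoffSum T g n x ≤ maxBirkhoffSum T g N x := by
  rw [maxBirkhoffSum, Finset.sup'_apply]
  exact le_sup' (fun n => birkhoffSum T g n x) (mem_range_succ_iff.2 hn)

lemma exists_birkhoffSum_eq_maxBirkhoffSum (N : ℕ) (x : X) :
    ∃ n ≤ N, maxBirkhoffSum T g N x = birkhoffSum T g n x := by
  rw [maxBirkhoffSum, Finset.sup'_apply]
  obtain ⟨n, hn, h⟩ := exists_mem_eq_sup' nonempty_range_add_one fun n => birkhoffSum T g n x
  exact ⟨n, mem_range_succ_iff.1 hn, h⟩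

lemma maxBirkhoffSum_nonneg (N : ℕ) (x : X) : 0 ≤ maxBirkhoffSum T g N x := by
  simpa using birkhoffSum_le_maxBirkhoffSum (T := T) (g := g) N.zero_le x

lemma maxBirkhoffSum_mono {N N' : ℕ} (h : N ≤ N') (x : X) :
    maxBirkhoffSum T g N x ≤ maxBirkhoffSum T g N' x := by
  obtain ⟨n, hn, heq⟩ := exists_birkhoffSum_eq_maxBirkhoffSum (T := T) (g := g) N x
  rw [heq]
  exact birkhoffSum_le_maxBirkhoffSum (hn.trans h) x

/-- Where the maximum is positive it is attained at some `n ≥ 1`, and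
`S_n x = g x + S_{n-1} (T x)`. -/
lemma maxBirkhoffSum_le_add_maxBirkhoffSum_comp {N : ℕ} {x : X}
    (hx : 0 < maxBirkhoffSum T g N x) :
    maxBirkhoffSum T g N x ≤ g x + maxBirkhoffSum T g N (T x) := by
  obtain ⟨n, hn, heq⟩ := exists_birkhoffSum_eq_maxBirkhoffSum (T := T) (g := g) N x
  rcases n with _ | n
  · simp [heq] at hx
  · rw [heq, birkhoffSum_succ']
    exact add_le_add_right (birkhoffSum_le_maxBirkhoffSum (by omega) _) _

/-- Each visit to the set where all Birkhoff sums of positive length are `≥ c` raises the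
running sum by at least `c`. -/
lemma exists_birkhoffSum_pos_of_frequently {c : ℝ} (hc : 0 < c) {x : X}
    (h : ∃ᶠ m in atTop, ∀ n, 0 < n → c ≤ birkhoffSum T g n (T^[m] x)) :
    ∃ n, 0 < birkhoffSum T g n x := by
  obtain ⟨m₀, hm₀⟩ := h.exists
  have climb : ∀ k : ℕ, ∃ m, (∀ n, 0 < n → c ≤ birkhoffSum T g n (T^[m] x)) ∧
      birkhoffSum T g m₀ x + k * c ≤ birkhoffSum T g m x := by
    intro k
    induction k with
    | zero => exact ⟨m₀, hm₀, by simp⟩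
    | succ k ih =>
      obtain ⟨m, hm, hmk⟩ := ih
      obtain ⟨m', hm'm, hm'⟩ := frequently_atTop.1 h (m + 1)
      refine ⟨m', hm', ?_⟩
      have hsplit := birkhoffSum_add T g m (m' - m) x
      rw [Nat.add_sub_cancel' (by omega)] at hsplit
      have := hm (m' - m) (by omega)
      push_cast
      linarith
  obtain ⟨k, hk⟩ := exists_nat_gt (-birkhoffSum T g m₀ x / c)
  obtain ⟨m, -, hm⟩ := climb k
  refine ⟨m, lt_of_lt_of_le ?_ hm⟩
  have := (div_lt_iff₀ hc).1 hk
  linarith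

variable [MeasurableSpace X] {μ : Measure X}

lemma measurable_birkhoffSum (hT : Measurable T) (hg : Measurable g) (n : ℕ) :
    Measurable (birkhoffSum T g n) :=
  Finset.measurable_sum _ fun k _ => hg.comp (hT.iterate k)

lemma measurable_maxBirkhoffSum (hT : Measurable T) (hg : Measurable g) (N : ℕ) :
    Measurable (maxBirkhoffSum T g N) :=
  Finset.measurable_sup' _ fun n _ => measurable_birkhoffSum hT hg n

lemma integrable_birkhoffSum (hT : MeasurePreserving T μ μ) (hg : Integrable g μ) (n : ℕ) :
    Integrable (birkhoffSum T g n) μ :=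
  integrable_finsetSum _ fun k _ => (hT.iterate k).integrable_comp_of_integrable hg

lemma integrable_maxBirkhoffSum (hT : MeasurePreserving T μ μ) (hg : Integrable g μ) (N : ℕ) :
    Integrable (maxBirkhoffSum T g N) μ :=
  Finset.sup'_induction (p := fun f => Integrable f μ) _ _ (fun _ h₁ _ h₂ => h₁.sup h₂)
    fun n _ => integrable_birkhoffSum hT hg n

/-- The maximal ergodic inequality, by Garsia's argument: `F ≤ g + F ∘ T` on `{F > 0}`,
`F = 0` off it, and `∫ F ∘ T = ∫ F`. -/
theorem setIntegral_maxBirkhoffSum_pos_nonneg (hT : MeasurePreserving T μ μ) (hgm : Measurable g)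
    (hg : Integrable g μ) (N : ℕ) :
    0 ≤ ∫ x in {x | 0 < maxBirkhoffSum T g N x}, g x ∂μ := by
  set F := maxBirkhoffSum T g N
  set A := {x | 0 < F x}
  have hFm : Measurable F := measurable_maxBirkhoffSum hT.measurable hgm N
  have hF : Integrable F μ := integrable_maxBirkhoffSum hT hg N
  have hFT : Integrable (fun x => F (T x)) μ := hT.integrable_comp_of_integrable hF
  have hFA : ∫ x in A, F x ∂μ = ∫ x, F x ∂μ :=
    setIntegral_eq_integral_of_forall_compl_eq_zero fun x hx =>
      le_antisymm (not_lt.1 hx) (maxBirkhoffSum_nonneg N x)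
  have hFTA : ∫ x in A, F (T x) ∂μ ≤ ∫ x, F (T x) ∂μ :=
    setIntegral_le_integral hFT (.of_forall fun x => maxBirkhoffSum_nonneg N (T x))
  have hFT_eq : ∫ x, F (T x) ∂μ = ∫ x, F x ∂μ := by
    rw [← integral_map hT.aemeasurable (hT.map_eq ▸ hFm.aestronglyMeasurable), hT.map_eq]
  have key : ∫ x in A, (F x - F (T x)) ∂μ ≤ ∫ x in A, g x ∂μ :=
    setIntegral_mono_on (hF.sub hFT).integrableOn hg.integrableOn
      (measurableSet_lt measurable_const hFm) fun x hx => by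
        linarith [maxBirkhoffSum_le_add_maxBirkhoffSum_comp (T := T) (g := g) hx]
  rw [integral_sub hF.integrableOn hFT.integrableOn] at key
  linarith

theorem integral_nonneg_of_ae_exists_birkhoffSum_pos (hT : MeasurePreserving T μ μ)
    (hgm : Measurable g) (hg : Integrable g μ)
    (h : ∀ᵐ x ∂μ, ∃ n, 0 < birkhoffSum T g n x) :
    0 ≤ ∫ x, g x ∂μ := by
  have hA : {x | ∃ n, 0 < birkhoffSum T g n x} = ⋃ N, {x | 0 < maxBirkhoffSum T g N x} := by
    ext x
    simp only [Set.mem_ofPred_eq, Set.mem_iUnion]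
    constructor
    · rintro ⟨n, hn⟩
      exact ⟨n, hn.trans_le (birkhoffSum_le_maxBirkhoffSum le_rfl x)⟩
    · rintro ⟨N, hN⟩
      obtain ⟨n, -, heq⟩ := exists_birkhoffSum_eq_maxBirkhoffSum (T := T) (g := g) N x
      exact ⟨n, heq ▸ hN⟩
  have hlim := tendsto_setIntegral_of_monotone (μ := μ) (f := g)
    (s := fun N => {x | 0 < maxBirkhoffSum T g N x})
    (fun N => measurableSet_lt measurable_const (measurable_maxBirkhoffSum hT.measurable hgm N))
    (fun N N' h x (hx : 0 < _) => hx.trans_le (maxBirkhoffSum_mono h x)) hg.integrableOn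
  rw [← hA, Measure.restrict_eq_self_of_ae_mem (s := {x | ∃ n, 0 < birkhoffSum T g n x}) h]
    at hlim
  exact ge_of_tendsto' hlim fun N => setIntegral_maxBirkhoffSum_pos_nonneg hT hgm hg N

theorem Ergodic.ae_frequently_mem_of_measure_ne_zero [IsFiniteMeasure μ] (hT : Ergodic T μ)
    {s : Set X} (hs : MeasurableSet s) (h0 : μ s ≠ 0) :
    ∀ᵐ x ∂μ, ∃ᶠ n in atTop, T^[n] x ∈ s := by
  set U := {x | ∃ᶠ n in atTop, T^[n] x ∈ s}
  have hUm : MeasurableSet U := by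
    have : U = limsup (fun n => T^[n] ⁻¹' s) atTop := by
      ext x
      simp [U, mem_limsup_iff_frequently_mem]
    exact this ▸ MeasurableSet.measurableSet_limsup fun n => hT.measurable.iterate n hs
  have hUinv : T ⁻¹' U = U := by
    ext x
    simp only [U, Set.mem_preimage, Set.mem_ofPred_eq]
    conv_rhs => rw [← map_add_atTop_eq_nat 1, frequently_map]
    simp only [Function.iterate_succ_apply]
  have hsU : s ≤ᵐ[μ] U :=
    hT.toMeasurePreserving.conservative.ae_mem_imp_frequently_image_mem hs.nullMeasurableSet
  rcases hT.ae_empty_or_univ hUm hUinv with hU | hU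
  · exact absurd (measure_mono_null_ae hsU (by simpa using measure_congr hU)) h0
  · exact mem_ae_iff.2 (ae_eq_univ.1 hU)

end BirkhoffSums

section Shift

variable {S : Type*}

def rightShift (x : ℤ → S) : ℤ → S := fun i => x (i - 1)

def shiftEquiv (S : Type*) [MeasurableSpace S] : (ℤ → S) ≃ᵐ (ℤ → S) where
  toFun := leftShift
  invFun := rightShift
  left_inv x := funext fun i => by simp [leftShift, rightShift]
  right_inv x := funext fun i => by simp [leftShift, rightShift]
  measurable_toFun := measurable_pi_lambda _ fun _ => measurable_pi_apply _
  measurable_invFun := measurable_pi_lambda _ fun _ => measurable_pi_apply _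

def shiftBy (i : ℤ) (x : ℤ → S) : ℤ → S := fun t => x (t + i)

lemma iterate_leftShift (n : ℕ) : (leftShift (S := S))^[n] = shiftBy n := by
  induction n with
  | zero => funext x t; simp [shiftBy]
  | succ n ih =>
    funext x t
    rw [Function.iterate_succ_apply', ih]
    simp only [leftShift, shiftBy]
    congr 1
    push_cast
    ring

lemma iterate_rightShift (n : ℕ) : (rightShift (S := S))^[n] = shiftBy (-n) := by
  induction n with
  | zero => funext x t; simp [shiftBy]
  | succ n ih =>
    funext x t
    rw [Function.iterate_succ_apply', ih]
    simp only [rightShift, shiftBy]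
    congr 1
    push_cast
    ring

lemma shiftBy_shiftBy (i j : ℤ) (x : ℤ → S) :
    shiftBy i (shiftBy j x) = shiftBy (i + j) x := by
  funext t
  simp only [shiftBy, add_assoc]

lemma measurePreserving_shiftBy [MeasurableSpace S] {μ : Measure (ℤ → S)}
    (h : MeasurePreserving leftShift μ μ) (i : ℤ) : MeasurePreserving (shiftBy i) μ μ := by
  obtain ⟨n, rfl | rfl⟩ := Int.eq_nat_or_neg i
  · rw [← iterate_leftShift]
    exact h.iterate n
  · rw [← iterate_rightShift]
    have hR : MeasurePreserving rightShift μ μ := MeasurePreserving.symm (shiftEquiv S) h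
    exact hR.iterate n

end Shift

section FullShift

variable {M : ℕ}

lemma epsα_le_one (a : Option (Fin M)) : epsα a ≤ 1 := by
  unfold epsα
  split <;> norm_num

lemma Hα_neg_natCast (x : ℤ → Option (Fin M)) (n : ℕ) :
    Hα x (-n) = -∑ j ∈ range n, epsα (x (-(j : ℤ) - 1)) := by
  rcases n with _ | n
  · simp [Hα]
  · rw [Hα, if_neg (by omega), neg_neg, Int.toNat_natCast]

lemma Hα_add_one (x : ℤ → Option (Fin M)) (i : ℤ) :
    Hα x (i + 1) = Hα x i + epsα (x i) := by
  obtain ⟨n, rfl | rfl⟩ := Int.eq_nat_or_neg i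
  · rw [← Nat.cast_succ, Hα, Hα, if_pos (by omega), if_pos (by omega), Int.toNat_natCast, Int.toNat_natCast,
      sum_range_succ]
  · rcases n with _ | n
    · simp [Hα]
    · have h : -((n + 1 : ℕ) : ℤ) + 1 = -(n : ℤ) := by push_cast; ring
      rw [h, Hα_neg_natCast, Hα_neg_natCast, sum_range_succ, Nat.cast_succ]
      simp only [neg_add']
      ring

lemma pos_of_forall_ne_zero_of_sub_one_le {a : ℕ → ℤ} (h0 : 0 < a 0)
    (hstep : ∀ n, a n - 1 ≤ a (n + 1)) (hne : ∀ n, a n ≠ 0) (n : ℕ) : 0 < a n := by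
  induction n with
  | zero => exact h0
  | succ n ih => have := hstep n; have := hne (n + 1); omega

def betaWeight (x : ℤ → Option (Fin M)) : ℝ := -epsα (x 0)

lemma measurable_betaWeight : Measurable (betaWeight (M := M)) :=
  (measurable_from_top (f := fun a : Option (Fin M) => -(epsα a : ℝ))).comp
    (measurable_pi_apply 0)

lemma birkhoffSum_betaWeight_shiftBy (x : ℤ → Option (Fin M)) (i : ℤ) (n : ℕ) :
    birkhoffSum rightShift betaWeight n (shiftBy i x) =
      ((Hα x (i + 1 - n) - Hα x (i + 1) : ℤ) : ℝ) := by
  induction n with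
  | zero => simp
  | succ n ih =>
    rw [birkhoffSum_succ, ih, iterate_rightShift, shiftBy_shiftBy,
      show i + 1 - ((n + 1 : ℕ) : ℤ) = i - n by push_cast; ring,
      show i + 1 - (n : ℤ) = (i - n) + 1 by ring, Hα_add_one]
    simp only [betaWeight, shiftBy, zero_add, neg_add_eq_sub]
    push_cast
    ring

/-- By `birkhoffSum_betaWeight_shiftBy` at `i = 0`, this says `H_{α,1-n}(x) > H_{α,1}(x)` for
all `n ≥ 1`: the symbol at coordinate `0` is a `β` that is never matched. -/
def unmatchedAtZero (M : ℕ) : Set (ℤ → Option (Fin M)) :=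
  {x | ∀ n, 0 < n → 1 ≤ birkhoffSum rightShift betaWeight n x}

lemma measurableSet_unmatchedAtZero : MeasurableSet (unmatchedAtZero M) := by
  simp only [unmatchedAtZero, Set.ofPred_forall]
  exact .iInter fun n => .iInter fun _ => measurableSet_le measurable_const
    (measurable_birkhoffSum (shiftEquiv _).symm.measurable measurable_betaWeight n)

lemma exists_shiftBy_mem_unmatchedAtZero {x : ℤ → Option (Fin M)} (hx : x ∉ Kα M) :
    ∃ i : ℤ, shiftBy i x ∈ unmatchedAtZero M := by
  simp only [Kα, Set.mem_ofPred_eq, not_forall, not_exists, not_and] at hx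
  obtain ⟨i, hi, hne⟩ := hx
  have hpos : ∀ k : ℕ, 0 < Hα x (i - k) - Hα x (i + 1) := by
    refine pos_of_forall_ne_zero_of_sub_one_le ?_ (fun k => ?_) (fun k => ?_)
    · simp [Hα_add_one, hi, epsα]
    · have := Hα_add_one x (i - (k + 1 : ℕ))
      have := epsα_le_one (x (i - (k + 1 : ℕ)))
      rw [show i - ((k + 1 : ℕ) : ℤ) + 1 = i - k by push_cast; ring] at *
      linarith
    · refine sub_ne_zero.2 ?_
      simpa [sub_add] using hne (k + 1) (by omega)
  refine ⟨i, fun n hn => ?_⟩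
  obtain ⟨k, rfl⟩ := Nat.exists_eq_add_of_lt hn
  rw [birkhoffSum_betaWeight_shiftBy,
    show i + 1 - ((0 + k + 1 : ℕ) : ℤ) = i - k by push_cast; ring]
  exact_mod_cast hpos k

lemma integral_betaWeight (ν : Measure (ℤ → Option (Fin M))) [IsProbabilityMeasure ν] :
    ∫ x, betaWeight x ∂ν = 2 * ν.real {x | x 0 = none} - 1 := by
  set β : Set (ℤ → Option (Fin M)) := {x | x 0 = none}
  have hβ : MeasurableSet β :=
    measurable_pi_apply (X := fun _ : ℤ => Option (Fin M)) 0 (measurableSet_singleton none)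
  have hweight : betaWeight = fun x => 2 * β.indicator 1 x - 1 := by
    funext x
    by_cases h : x 0 = none <;> norm_num [β, betaWeight, epsα, h]
  have hind : Integrable (β.indicator (1 : (ℤ → Option (Fin M)) → ℝ)) ν :=
    (integrable_const 1).indicator hβ
  rw [hweight, integral_sub (hind.const_mul 2) (integrable_const 1), integral_const_mul,
    integral_indicator_one hβ]
  simp

theorem measure_unmatchedAtZero_eq_zero {ν : Measure (ℤ → Option (Fin M))}
    [IsProbabilityMeasure ν] (herg : Ergodic leftShift ν) (hβ : ν {x | x 0 = none} < 1 / 2) :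
    ν (unmatchedAtZero M) = 0 := by
  by_contra h0
  have hR : Ergodic rightShift ν := Ergodic.symm (e := shiftEquiv _) herg
  have hpos : ∀ᵐ x ∂ν, ∃ n, 0 < birkhoffSum rightShift betaWeight n x :=
    (hR.ae_frequently_mem_of_measure_ne_zero measurableSet_unmatchedAtZero h0).mono
      fun x hx => exists_birkhoffSum_pos_of_frequently one_pos hx
  have hint : Integrable (betaWeight (M := M)) ν :=
    .of_bound measurable_betaWeight.aestronglyMeasurable 1 (.of_forall fun x => by
      unfold betaWeight epsα; split <;> simp)
  have h := integral_nonneg_of_ae_exists_birkhoffSum_pos hR.toMeasurePreserving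
    measurable_betaWeight hint hpos
  have hβ' : ν.real {x | x 0 = none} < 1 / 2 := by
    simpa [measureReal_def] using
      (ENNReal.toReal_lt_toReal (measure_ne_top _ _) (by norm_num)).2 hβ
  rw [integral_betaWeight] at h
  linarith

end FullShift

theorem stmt9_general (M : ℕ) (ν : Measure (ℤ → Option (Fin M)))
    [IsProbabilityMeasure ν] (herg : Ergodic leftShift ν)
    (hβ : ν {x | x 0 = none} < 1 / 2) :
    ν (Kα M) = 1 := by
  have hnull : ν (⋃ i : ℤ, shiftBy i ⁻¹' unmatchedAtZero M) = 0 :=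
    measure_iUnion_null fun i => by
      rw [(measurePreserving_shiftBy herg.toMeasurePreserving i).measure_preimage
        measurableSet_unmatchedAtZero.nullMeasurableSet]
      exact measure_unmatchedAtZero_eq_zero herg hβ
  have hK : ν (Kα M)ᶜ = 0 :=
    measure_mono_null (fun _ hx => Set.mem_iUnion.2 (exists_shiftBy_mem_unmatchedAtZero hx)) hnull
  rw [measure_congr (ae_eq_univ.2 hK), measure_univ]

/-- If `ν` is an ergodic shift-invariant Borel probability measure on the
full shift `Σ_α = (D_α ∪ {β})^ℤ` with `ν([β]) < 1/2`, then `ν(K_α) = 1`. -/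
theorem stmt9 (M : ℕ) (hM : 2 ≤ M) (ν : Measure (ℤ → Option (Fin M)))
    [IsProbabilityMeasure ν] (herg : Ergodic leftShift ν)
    (hβ : ν {x | x 0 = none} < 1 / 2) :
    ν (Kα M) = 1 :=
  stmt9_general M ν herg hβ
end
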